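/- On R^6 with the Poisson brackets of A_{6,25} (P: P^{13}=p13, P^{24}=p24, P^{26}=p24 x5, P^{36}=p36, P^{56}=p56; P': P'^{13}=a31 x1, P'^{24}=b42 x2+b44 x4, P'^{26}=(b42 x2+b44 x4)x5, P'^{56}=e65 x5), assume p13 p24 p56 ≠ 0. Then with u = a31 x1/p13, v = (b42 x2 + b44 x4)/p24, w = e65 x5/p56, the functions H1 = u+v+w, H2 = (u^2+v^2+w^2)/2, H3 = (u^3+v^3+w^3)/3 are pairwise in involution with respect to both brackets. -/

import Mathlib

open scoped BigOperators

noncomputable def pd {m : ℕ} (μ : Fin m) (f : (Fin m → ℝ) → ℝ) (x : Fin m → ℝ) : ℝ :=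
  fderiv ℝ f x (Pi.single μ 1)

/-- Poisson bracket associated to a bivector field `P`. -/
noncomputable def pbrk {m : ℕ} (P : (Fin m → ℝ) → Fin m → Fin m → ℝ)
    (f g : (Fin m → ℝ) → ℝ) (x : Fin m → ℝ) : ℝ :=
  ∑ μ, ∑ ν, P x μ ν * pd μ f x * pd ν g x

/-- Schouten bracket `[P,P]^{λμν}`. -/
noncomputable def schouten {m : ℕ} (P : (Fin m → ℝ) → Fin m → Fin m → ℝ)
    (l μ ν : Fin m) (x : Fin m → ℝ) : ℝ :=
  ∑ ρ, (P x ρ l * pd ρ (fun y => P y μ ν) x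
      + P x ρ ν * pd ρ (fun y => P y l μ) x
      + P x ρ μ * pd ρ (fun y => P y ν l) x)

/-- Mixed Schouten bracket `[P,Q]^{λμν}`. -/
noncomputable def schoutenMixed {m : ℕ} (P Q : (Fin m → ℝ) → Fin m → Fin m → ℝ)
    (l μ ν : Fin m) (x : Fin m → ℝ) : ℝ :=
  ∑ ρ, (P x ρ l * pd ρ (fun y => Q y μ ν) x + Q x ρ l * pd ρ (fun y => P y μ ν) x
      + P x ρ ν * pd ρ (fun y => Q y l μ) x + Q x ρ ν * pd ρ (fun y => P y l μ) x
      + P x ρ μ * pd ρ (fun y => Q y ν l) x + Q x ρ μ * pd ρ (fun y => P y ν l) x)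

/-- The Poisson bivector `P` on the nilpotent group `A_{6,25}`. -/
noncomputable def P625 (p13 p24 p36 p56 : ℝ) : (Fin 6 → ℝ) → Fin 6 → Fin 6 → ℝ :=
  fun x μ ν =>
    let C := p24 * x 4
    !![0, 0, p13, 0, 0, 0;
       0, 0, 0, p24, 0, C;
       -p13, 0, 0, 0, 0, p36;
       0, -p24, 0, 0, 0, 0;
       0, 0, 0, 0, 0, p56;
       0, -C, -p36, 0, -p56, 0] μ ν

/-- The Poisson bivector `P'` on the nilpotent group `A_{6,25}`. -/
noncomputable def P625' (a31 b42 b44 e65 : ℝ) : (Fin 6 → ℝ) → Fin 6 → Fin 6 → ℝ :=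
  fun x μ ν =>
    let A := a31 * x 0
    let B := b42 * x 1 + b44 * x 3
    let C := b42 * x 1 * x 4 + b44 * x 3 * x 4
    let E := e65 * x 4
    !![0, 0, A, 0, 0, 0;
       0, 0, 0, B, 0, C;
       -A, 0, 0, 0, 0, 0;
       0, -B, 0, 0, 0, 0;
       0, 0, 0, 0, 0, E;
       0, -C, 0, 0, -E, 0] μ ν

/-!
The functions `u`, `v`, `w` are linear, with gradients supported on the coordinate blocks
`{x₁}`, `{x₂, x₄}`, `{x₅}` (indices `0`, `{1, 3}`, `4` of `Fin 6`, as in `blockCoeffs`).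
Neither bivector has a component coupling two different blocks, and inside the block
`{x₂, x₄}` the two terms cancel by antisymmetry, so `u`, `v`, `w` pairwise commute for both
brackets. Since `d((φ₁ᵏ + ⋯ + φₙᵏ)/k) = Σ φᵢᵏ⁻¹ dφᵢ`, every bracket of two power sums is a
combination of the brackets `{φᵢ, φⱼ}`, hence vanishes.
-/

variable {m : ℕ}

lemma hasFDerivAt_dotProduct (c x : Fin m → ℝ) :
    HasFDerivAt (fun y => c ⬝ᵥ y)
      (∑ ν, c ν • ContinuousLinearMap.proj (R := ℝ) (φ := fun _ : Fin m => ℝ) ν) x :=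
  HasFDerivAt.fun_sum fun ν _ => (hasFDerivAt_apply ν x).const_smul (c ν)

lemma pd_dotProduct (c : Fin m → ℝ) (μ : Fin m) (x : Fin m → ℝ) :
    pd μ (fun y => c ⬝ᵥ y) x = c μ := by
  simp [pd, (hasFDerivAt_dotProduct c x).fderiv, Pi.single_apply]

noncomputable def normalizedPowerSum {ι : Type*} [Fintype ι] (n : ℕ)
    (φ : ι → (Fin m → ℝ) → ℝ) : (Fin m → ℝ) → ℝ :=
  fun y => ((n : ℝ) + 1)⁻¹ * ∑ i, φ i y ^ (n + 1)

lemma pd_normalizedPowerSum {ι : Type*} [Fintype ι] (n : ℕ) {φ : ι → (Fin m → ℝ) → ℝ}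
    {x : Fin m → ℝ} (hφ : ∀ i, DifferentiableAt ℝ (φ i) x) (μ : Fin m) :
    pd μ (normalizedPowerSum n φ) x = ∑ i, φ i x ^ n * pd μ (φ i) x := by
  have h : HasFDerivAt (fun y => ∑ i, φ i y ^ (n + 1))
      (∑ i, ((n + 1 : ℝ) * φ i x ^ n) • fderiv ℝ (φ i) x) x :=
    HasFDerivAt.fun_sum fun i _ => by simpa using (hφ i).hasFDerivAt.pow (n + 1)
  have hn : (n : ℝ) + 1 ≠ 0 := n.cast_add_one_ne_zero
  unfold normalizedPowerSum
  rw [pd, (h.const_mul ((n : ℝ) + 1)⁻¹).fderiv]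
  simp [pd, Finset.mul_sum, ← mul_assoc, inv_mul_cancel₀ hn]

section Bracket

variable (P : (Fin m → ℝ) → Fin m → Fin m → ℝ)

lemma pbrk_eq_sum_left {ι : Type*} [Fintype ι] {f g : (Fin m → ℝ) → ℝ} {x : Fin m → ℝ}
    {φ : ι → (Fin m → ℝ) → ℝ} {a : ι → ℝ} (hf : ∀ μ, pd μ f x = ∑ i, a i * pd μ (φ i) x) :
    pbrk P f g x = ∑ i, a i * pbrk P (φ i) g x := by
  simp only [pbrk, hf, Finset.mul_sum, Finset.sum_mul]
  symm
  rw [Finset.sum_comm]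
  refine Finset.sum_congr rfl fun μ _ => ?_
  rw [Finset.sum_comm]
  exact Finset.sum_congr rfl fun ν _ => Finset.sum_congr rfl fun i _ => by ring

lemma pbrk_eq_sum_right {ι : Type*} [Fintype ι] {f g : (Fin m → ℝ) → ℝ} {x : Fin m → ℝ}
    {ψ : ι → (Fin m → ℝ) → ℝ} {b : ι → ℝ} (hg : ∀ ν, pd ν g x = ∑ j, b j * pd ν (ψ j) x) :
    pbrk P f g x = ∑ j, b j * pbrk P f (ψ j) x := by
  simp only [pbrk, hg, Finset.mul_sum]
  symm
  rw [Finset.sum_comm]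
  refine Finset.sum_congr rfl fun μ _ => ?_
  rw [Finset.sum_comm]
  exact Finset.sum_congr rfl fun ν _ => Finset.sum_congr rfl fun i _ => by ring

lemma pbrk_normalizedPowerSum_eq_zero {ι : Type*} [Fintype ι] {φ : ι → (Fin m → ℝ) → ℝ}
    {x : Fin m → ℝ} (hφ : ∀ i, DifferentiableAt ℝ (φ i) x)
    (hcomm : ∀ i j, pbrk P (φ i) (φ j) x = 0) (n k : ℕ) :
    pbrk P (normalizedPowerSum n φ) (normalizedPowerSum k φ) x = 0 := by
  rw [pbrk_eq_sum_left P (pd_normalizedPowerSum n hφ)]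
  simp [pbrk_eq_sum_right P (pd_normalizedPowerSum k hφ), hcomm]

lemma pbrk_dotProduct (c d x : Fin m → ℝ) :
    pbrk P (fun y => c ⬝ᵥ y) (fun y => d ⬝ᵥ y) x = ∑ μ, ∑ ν, P x μ ν * c μ * d ν := by
  simp only [pbrk, pd_dotProduct]

end Bracket

def blockCoeffs (c₀ c₁ c₃ c₄ : ℝ) : Fin 3 → Fin 6 → ℝ :=
  ![![c₀, 0, 0, 0, 0, 0], ![0, c₁, 0, c₃, 0, 0], ![0, 0, 0, 0, c₄, 0]]

lemma pbrk_P625_blockCoeffs (p13 p24 p36 p56 c₀ c₁ c₃ c₄ : ℝ) (i j : Fin 3) (x : Fin 6 → ℝ) :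
    pbrk (P625 p13 p24 p36 p56) (fun y => blockCoeffs c₀ c₁ c₃ c₄ i ⬝ᵥ y)
      (fun y => blockCoeffs c₀ c₁ c₃ c₄ j ⬝ᵥ y) x = 0 := by
  rw [pbrk_dotProduct]
  fin_cases i <;> fin_cases j <;> simp [Fin.sum_univ_six, P625, blockCoeffs]
  ring

lemma pbrk_P625'_blockCoeffs (a31 b42 b44 e65 c₀ c₁ c₃ c₄ : ℝ) (i j : Fin 3) (x : Fin 6 → ℝ) :
    pbrk (P625' a31 b42 b44 e65) (fun y => blockCoeffs c₀ c₁ c₃ c₄ i ⬝ᵥ y)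
      (fun y => blockCoeffs c₀ c₁ c₃ c₄ j ⬝ᵥ y) x = 0 := by
  rw [pbrk_dotProduct]
  fin_cases i <;> fin_cases j <;> simp [Fin.sum_univ_six, P625', blockCoeffs]
  ring

theorem A625_bi_involution (p13 p24 p36 p56 a31 b42 b44 e65 : ℝ) :
    let u : (Fin 6 → ℝ) → ℝ := fun x => a31 * x 0 / p13
    let v : (Fin 6 → ℝ) → ℝ := fun x => (b42 * x 1 + b44 * x 3) / p24
    let w : (Fin 6 → ℝ) → ℝ := fun x => e65 * x 4 / p56
    let H : Fin 3 → (Fin 6 → ℝ) → ℝ :=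
      ![fun x => u x + v x + w x,
        fun x => ((u x) ^ 2 + (v x) ^ 2 + (w x) ^ 2) / 2,
        fun x => ((u x) ^ 3 + (v x) ^ 3 + (w x) ^ 3) / 3]
    ∀ i j : Fin 3, ∀ x,
      pbrk (P625 p13 p24 p36 p56) (H i) (H j) x = 0 ∧
      pbrk (P625' a31 b42 b44 e65) (H i) (H j) x = 0 := by
  intro u v w H i j x
  set c := blockCoeffs (a31 / p13) (b42 / p24) (b44 / p24) (e65 / p56)
  have hH (k : Fin 3) : H k = normalizedPowerSum k fun i y => c i ⬝ᵥ y := by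
    funext y
    fin_cases k <;>
      simp [H, u, v, w, c, normalizedPowerSum, blockCoeffs, dotProduct, Fin.sum_univ_three,
        Fin.sum_univ_six] <;> ring
  have hφ (i : Fin 3) : DifferentiableAt ℝ (fun y => c i ⬝ᵥ y) x :=
    (hasFDerivAt_dotProduct (c i) x).differentiableAt
  rw [hH i, hH j]
  exact ⟨pbrk_normalizedPowerSum_eq_zero _ hφ
      (pbrk_P625_blockCoeffs p13 p24 p36 p56 _ _ _ _ · · x) i j,
    pbrk_normalizedPowerSum_eq_zero _ hφ
      (pbrk_P625'_blockCoeffs a31 b42 b44 e65 _ _ _ _ · · x) i j⟩
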